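/- (Closed-form APRIL, full input recovery.) Let the input image patches be x ∈ ℝ^{m×p}, the patch embedding be E_patch = W_p x with W_p ∈ ℝ^{c×m}, and the loss be L(Q,K,V,E_pos) = g(Qz, Kz, Vz) with z = E_patch + E_pos. Set M := ∇_{E_pos} L ∈ ℝ^{c×p} and B := Qᵀ(∇_Q L) + Kᵀ(∇_K L) + Vᵀ(∇_V L) ∈ ℝ^{c×c}. If M has full column rank p and W_p has full column rank m, then x is uniquely determined by (Q,K,V,E_pos,∇_Q L,∇_K L,∇_V L,M): namely x = (W_pᵀW_p)⁻¹ W_pᵀ ( ((MᵀM)⁻¹ Mᵀ B)ᵀ − E_pos ), and x is the only image whose patch embedding plus E_pos solves M zᵀ = B. -/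

import Mathlib

/-!
Since `q = Qz`, `k = Kz`, `v = Vz` are linear in each of `Q`, `K`, `V` and in `E_pos`, the chain
rule gives `∇_Q L = G_q zᵀ`, `∇_K L = G_k zᵀ`, `∇_V L = G_v zᵀ` and
`M = ∇_{E_pos} L = Qᵀ G_q + Kᵀ G_k + Vᵀ G_v`, hence `B = M zᵀ`. A matrix `A` of full column
rank has the left inverse `(Aᵀ A)⁻¹ Aᵀ`; applying it for `A = M` recovers `zᵀ` from `B`, and
then for `A = W_p` recovers `x` from `z - E_pos = W_p x`. Injectivity of `X ↦ A X` gives uniqueness.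
-/

open Matrix

attribute [local instance] Matrix.normedAddCommGroup Matrix.normedSpace

noncomputable section

/-- `G` is the gradient matrix of the scalar function `F` at `X`:
it represents the Fréchet derivative of `F` at `X` via the Frobenius
inner product, `(dF)(H) = trace (Gᵀ * H)`. -/
def HasGradientMatrixAt {α β : Type*} [Fintype α] [Fintype β]
    (F : Matrix α β ℝ → ℝ) (G : Matrix α β ℝ) (X : Matrix α β ℝ) : Prop :=
  ∃ D : Matrix α β ℝ →L[ℝ] ℝ, HasFDerivAt F D X ∧ ∀ H, D H = Matrix.trace (Gᵀ * H)

/-- `(Gq, Gk, Gv)` are the gradient matrices of `g` with respect to its three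
matrix arguments at the point `x = (q, k, v)`, i.e. they represent the Fréchet
derivative of `g` at `x` via the Frobenius inner product. -/
def HasGradientTripleAt {d p : ℕ}
    (g : Matrix (Fin d) (Fin p) ℝ × Matrix (Fin d) (Fin p) ℝ × Matrix (Fin d) (Fin p) ℝ → ℝ)
    (Gq Gk Gv : Matrix (Fin d) (Fin p) ℝ)
    (x : Matrix (Fin d) (Fin p) ℝ × Matrix (Fin d) (Fin p) ℝ × Matrix (Fin d) (Fin p) ℝ) :
    Prop :=
  ∃ D : (Matrix (Fin d) (Fin p) ℝ × Matrix (Fin d) (Fin p) ℝ × Matrix (Fin d) (Fin p) ℝ) →L[ℝ] ℝ,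
    HasFDerivAt g D x ∧
    ∀ Hq Hk Hv, D (Hq, Hk, Hv) =
      Matrix.trace (Gqᵀ * Hq) + Matrix.trace (Gkᵀ * Hk) + Matrix.trace (Gvᵀ * Hv)

namespace Matrix

section FullColumnRank

variable {m n K : Type*} [Fintype m] [Fintype n] [DecidableEq n]

theorem isUnit_of_rank_eq_card [Field K] {A : Matrix n n K} (hA : A.rank = Fintype.card n) :
    IsUnit A := by
  rw [← mulVec_surjective_iff_isUnit]
  refine LinearMap.range_eq_top.mp
    (Submodule.eq_top_of_finrank_eq (S := LinearMap.range A.mulVecLin) ?_)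
  simpa [rank] using hA

variable [Field K] [LinearOrder K] [IsStrictOrderedRing K] {A : Matrix m n K}

theorem isUnit_transpose_mul_self_of_rank_eq_card (hA : A.rank = Fintype.card n) :
    IsUnit (Aᵀ * A) :=
  isUnit_of_rank_eq_card (by rw [rank_transpose_mul_self, hA])

theorem inv_transpose_mul_self_mul_transpose_mul_self (hA : A.rank = Fintype.card n) :
    (Aᵀ * A)⁻¹ * Aᵀ * A = 1 := by
  rw [Matrix.mul_assoc, nonsing_inv_mul _
    ((isUnit_iff_isUnit_det _).mp (isUnit_transpose_mul_self_of_rank_eq_card hA))]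

theorem inv_transpose_mul_self_mul_transpose_mul_cancel {l : Type*}
    (hA : A.rank = Fintype.card n) (X : Matrix n l K) :
    (Aᵀ * A)⁻¹ * Aᵀ * (A * X) = X := by
  rw [← Matrix.mul_assoc, inv_transpose_mul_self_mul_transpose_mul_self hA, Matrix.one_mul]

theorem mul_left_injective_of_rank_eq_card {l : Type*} (hA : A.rank = Fintype.card n) :
    Function.Injective fun X : Matrix n l K => A * X := fun X Y hXY => by
  rw [← inv_transpose_mul_self_mul_transpose_mul_cancel hA X,
    ← inv_transpose_mul_self_mul_transpose_mul_cancel hA Y]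
  exact congrArg _ hXY

end FullColumnRank

theorem trace_transpose_mul_mul_right {l m n R : Type*} [Fintype l] [Fintype m] [Fintype n]
    [CommRing R] (G : Matrix l n R) (H : Matrix l m R) (z : Matrix m n R) :
    trace (Gᵀ * (H * z)) = trace ((G * zᵀ)ᵀ * H) := by
  rw [transpose_mul, transpose_transpose, ← Matrix.mul_assoc, trace_mul_comm, Matrix.mul_assoc]

end Matrix

theorem HasGradientMatrixAt.unique {α β : Type*} [Fintype α] [Fintype β]
    {F : Matrix α β ℝ → ℝ} {G G' X : Matrix α β ℝ}
    (h : HasGradientMatrixAt F G X) (h' : HasGradientMatrixAt F G' X) : G = G' := by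
  obtain ⟨D, hD, hDG⟩ := h
  obtain ⟨D', hD', hDG'⟩ := h'
  refine transpose_injective (ext_iff_trace_mul_right.mpr fun H => ?_)
  rw [← hDG, ← hDG', hD.unique hD']

theorem hasFDerivAt_mul_const_add {l m n : Type*} [Fintype l] [Fintype m] [Fintype n]
    (A : Matrix l m ℝ) (z₀ E : Matrix m n ℝ) :
    HasFDerivAt (fun E' => A * (z₀ + E')) (mulLeftLinearMap _ ℝ A).toContinuousLinearMap E := by
  simp_rw [Matrix.mul_add]
  exact (mulLeftLinearMap _ ℝ A).toContinuousLinearMap.hasFDerivAt.const_add _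

section AttentionGradients

variable {d p c : ℕ}
  {g : Matrix (Fin d) (Fin p) ℝ × Matrix (Fin d) (Fin p) ℝ × Matrix (Fin d) (Fin p) ℝ → ℝ}
  {Gq Gk Gv : Matrix (Fin d) (Fin p) ℝ}

theorem HasGradientTripleAt.hasGradientMatrixAt_comp {α β : Type*} [Fintype α] [Fintype β]
    {f : Matrix α β ℝ →
      Matrix (Fin d) (Fin p) ℝ × Matrix (Fin d) (Fin p) ℝ × Matrix (Fin d) (Fin p) ℝ}
    {L : Matrix α β ℝ →L[ℝ]
      Matrix (Fin d) (Fin p) ℝ × Matrix (Fin d) (Fin p) ℝ × Matrix (Fin d) (Fin p) ℝ}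
    {X G : Matrix α β ℝ} (hg : HasGradientTripleAt g Gq Gk Gv (f X)) (hf : HasFDerivAt f L X)
    (hL : ∀ H, trace (Gqᵀ * (L H).1) + trace (Gkᵀ * (L H).2.1) + trace (Gvᵀ * (L H).2.2) =
      trace (Gᵀ * H)) :
    HasGradientMatrixAt (fun X' => g (f X')) G X := by
  obtain ⟨D, hD, hDG⟩ := hg
  exact ⟨D.comp L, hD.comp X hf, fun H => (hDG _ _ _).trans (hL H)⟩

variable (Q K V : Matrix (Fin d) (Fin c) ℝ) (z : Matrix (Fin c) (Fin p) ℝ)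

theorem HasGradientTripleAt.hasGradientMatrixAt_query
    (hg : HasGradientTripleAt g Gq Gk Gv (Q * z, K * z, V * z)) :
    HasGradientMatrixAt (fun Q' => g (Q' * z, K * z, V * z)) (Gq * zᵀ) Q :=
  hg.hasGradientMatrixAt_comp
    ((mulRightLinearMap _ ℝ z).toContinuousLinearMap.hasFDerivAt.prodMk
      (hasFDerivAt_const (K * z, V * z) Q))
    fun H => by
      show trace (Gqᵀ * (H * z)) + trace (Gkᵀ * 0) + trace (Gvᵀ * 0) = _
      simp only [Matrix.mul_zero, trace_zero, add_zero]
      exact trace_transpose_mul_mul_right Gq H z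

theorem HasGradientTripleAt.hasGradientMatrixAt_key
    (hg : HasGradientTripleAt g Gq Gk Gv (Q * z, K * z, V * z)) :
    HasGradientMatrixAt (fun K' => g (Q * z, K' * z, V * z)) (Gk * zᵀ) K :=
  hg.hasGradientMatrixAt_comp
    ((hasFDerivAt_const (Q * z) K).prodMk
      ((mulRightLinearMap _ ℝ z).toContinuousLinearMap.hasFDerivAt.prodMk
        (hasFDerivAt_const (V * z) K)))
    fun H => by
      show trace (Gqᵀ * 0) + trace (Gkᵀ * (H * z)) + trace (Gvᵀ * 0) = _
      simp only [Matrix.mul_zero, trace_zero, add_zero, zero_add]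
      exact trace_transpose_mul_mul_right Gk H z

theorem HasGradientTripleAt.hasGradientMatrixAt_value
    (hg : HasGradientTripleAt g Gq Gk Gv (Q * z, K * z, V * z)) :
    HasGradientMatrixAt (fun V' => g (Q * z, K * z, V' * z)) (Gv * zᵀ) V :=
  hg.hasGradientMatrixAt_comp
    ((hasFDerivAt_const (Q * z) V).prodMk
      ((hasFDerivAt_const (K * z) V).prodMk
        (mulRightLinearMap _ ℝ z).toContinuousLinearMap.hasFDerivAt))
    fun H => by
      show trace (Gqᵀ * 0) + trace (Gkᵀ * 0) + trace (Gvᵀ * (H * z)) = _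
      simp only [Matrix.mul_zero, trace_zero, zero_add]
      exact trace_transpose_mul_mul_right Gv H z

theorem HasGradientTripleAt.hasGradientMatrixAt_input (z₀ E : Matrix (Fin c) (Fin p) ℝ)
    (hg : HasGradientTripleAt g Gq Gk Gv (Q * (z₀ + E), K * (z₀ + E), V * (z₀ + E))) :
    HasGradientMatrixAt (fun E' => g (Q * (z₀ + E'), K * (z₀ + E'), V * (z₀ + E')))
      (Qᵀ * Gq + Kᵀ * Gk + Vᵀ * Gv) E :=
  hg.hasGradientMatrixAt_comp
    ((hasFDerivAt_mul_const_add Q z₀ E).prodMk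
      ((hasFDerivAt_mul_const_add K z₀ E).prodMk (hasFDerivAt_mul_const_add V z₀ E)))
    fun H => by
      show trace (Gqᵀ * (Q * H)) + trace (Gkᵀ * (K * H)) + trace (Gvᵀ * (V * H)) = _
      simp only [transpose_add, transpose_mul, transpose_transpose, Matrix.add_mul,
        trace_add, Matrix.mul_assoc]

theorem weight_gradients_eq_input_gradient_mul_transpose {z₀ E : Matrix (Fin c) (Fin p) ℝ}
    {M : Matrix (Fin c) (Fin p) ℝ} {GQ GK GV : Matrix (Fin d) (Fin c) ℝ}
    (hg : HasGradientTripleAt g Gq Gk Gv (Q * (z₀ + E), K * (z₀ + E), V * (z₀ + E)))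
    (hM : HasGradientMatrixAt
      (fun E' => g (Q * (z₀ + E'), K * (z₀ + E'), V * (z₀ + E'))) M E)
    (hGQ : HasGradientMatrixAt (fun Q' => g (Q' * (z₀ + E), K * (z₀ + E), V * (z₀ + E))) GQ Q)
    (hGK : HasGradientMatrixAt (fun K' => g (Q * (z₀ + E), K' * (z₀ + E), V * (z₀ + E))) GK K)
    (hGV : HasGradientMatrixAt (fun V' => g (Q * (z₀ + E), K * (z₀ + E), V' * (z₀ + E))) GV V) :
    Qᵀ * GQ + Kᵀ * GK + Vᵀ * GV = M * (z₀ + E)ᵀ := by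
  rw [hGQ.unique (hg.hasGradientMatrixAt_query ..), hGK.unique (hg.hasGradientMatrixAt_key ..),
    hGV.unique (hg.hasGradientMatrixAt_value ..), hM.unique (hg.hasGradientMatrixAt_input ..)]
  simp only [Matrix.add_mul, Matrix.mul_assoc]

end AttentionGradients

theorem april_full_input_recovery_general {p c d m : ℕ}
    (g : Matrix (Fin d) (Fin p) ℝ × Matrix (Fin d) (Fin p) ℝ × Matrix (Fin d) (Fin p) ℝ → ℝ)
    (Q K V : Matrix (Fin d) (Fin c) ℝ)
    (x : Matrix (Fin m) (Fin p) ℝ) (Wp : Matrix (Fin c) (Fin m) ℝ)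
    (Epos : Matrix (Fin c) (Fin p) ℝ)
    (z : Matrix (Fin c) (Fin p) ℝ) (hz : z = Wp * x + Epos)
    (Gq Gk Gv : Matrix (Fin d) (Fin p) ℝ)
    (hgrad : HasGradientTripleAt g Gq Gk Gv (Q * z, K * z, V * z))
    (M : Matrix (Fin c) (Fin p) ℝ) (GQ GK GV : Matrix (Fin d) (Fin c) ℝ)
    (hM : HasGradientMatrixAt
      (fun E => g (Q * (Wp * x + E), K * (Wp * x + E), V * (Wp * x + E))) M Epos)
    (hGQ : HasGradientMatrixAt (fun Q' => g (Q' * z, K * z, V * z)) GQ Q)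
    (hGK : HasGradientMatrixAt (fun K' => g (Q * z, K' * z, V * z)) GK K)
    (hGV : HasGradientMatrixAt (fun V' => g (Q * z, K * z, V' * z)) GV V)
    (hrankM : M.rank = p) (hrankW : Wp.rank = m) :
    x = (Wpᵀ * Wp)⁻¹ * Wpᵀ *
        ((((Mᵀ * M)⁻¹ * Mᵀ * (Qᵀ * GQ + Kᵀ * GK + Vᵀ * GV))ᵀ) - Epos) ∧
    (∀ x' : Matrix (Fin m) (Fin p) ℝ,
        M * (Wp * x' + Epos)ᵀ = Qᵀ * GQ + Kᵀ * GK + Vᵀ * GV → x' = x) := by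
  subst hz
  rw [weight_gradients_eq_input_gradient_mul_transpose Q K V hgrad hM hGQ hGK hGV]
  replace hrankM := hrankM.trans (Fintype.card_fin p).symm
  replace hrankW := hrankW.trans (Fintype.card_fin m).symm
  refine ⟨?_, fun x' hx' => ?_⟩
  · rw [inv_transpose_mul_self_mul_transpose_mul_cancel hrankM, transpose_transpose,
      add_sub_cancel_right, inv_transpose_mul_self_mul_transpose_mul_cancel hrankW]
  · have hz' := transpose_injective (mul_left_injective_of_rank_eq_card hrankM hx')
    exact mul_left_injective_of_rank_eq_card hrankW (add_right_cancel hz')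

theorem april_full_input_recovery {p c d m : ℕ}
    (hp : 0 < p) (hc : 0 < c) (hd : 0 < d) (hm : 0 < m)
    (g : Matrix (Fin d) (Fin p) ℝ × Matrix (Fin d) (Fin p) ℝ × Matrix (Fin d) (Fin p) ℝ → ℝ)
    (hg : Differentiable ℝ g)
    (Q K V : Matrix (Fin d) (Fin c) ℝ)
    (x : Matrix (Fin m) (Fin p) ℝ) (Wp : Matrix (Fin c) (Fin m) ℝ)
    (Epos : Matrix (Fin c) (Fin p) ℝ)
    (z : Matrix (Fin c) (Fin p) ℝ) (hz : z = Wp * x + Epos)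
    (Gq Gk Gv : Matrix (Fin d) (Fin p) ℝ)
    (hgrad : HasGradientTripleAt g Gq Gk Gv (Q * z, K * z, V * z))
    (M : Matrix (Fin c) (Fin p) ℝ) (GQ GK GV : Matrix (Fin d) (Fin c) ℝ)
    (hM : HasGradientMatrixAt
      (fun E => g (Q * (Wp * x + E), K * (Wp * x + E), V * (Wp * x + E))) M Epos)
    (hGQ : HasGradientMatrixAt (fun Q' => g (Q' * z, K * z, V * z)) GQ Q)
    (hGK : HasGradientMatrixAt (fun K' => g (Q * z, K' * z, V * z)) GK K)
    (hGV : HasGradientMatrixAt (fun V' => g (Q * z, K * z, V' * z)) GV V)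
    (hrankM : M.rank = p) (hrankW : Wp.rank = m) :
    x = (Wpᵀ * Wp)⁻¹ * Wpᵀ *
        ((((Mᵀ * M)⁻¹ * Mᵀ * (Qᵀ * GQ + Kᵀ * GK + Vᵀ * GV))ᵀ) - Epos) ∧
    (∀ x' : Matrix (Fin m) (Fin p) ℝ,
        M * (Wp * x' + Epos)ᵀ = Qᵀ * GQ + Kᵀ * GK + Vᵀ * GV → x' = x) :=
  april_full_input_recovery_general g Q K V x Wp Epos z hz Gq Gk Gv hgrad M GQ GK GV hM hGQ hGK hGV
    hrankM hrankW
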